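/- Let A, B be elements of a Banach algebra, let ρ > 0, α > 0 and γ < α be real, let n ∈ ℕ, and for m ∈ ℕ set f_m(t) = ∑_{k=0}^∞ Q_{k,m}^{A,B} t^{kρ+mα+α−γ−1} / Γ(kρ+mα+α−γ). Then for every t > 0, ∫₀ᵗ (t−s)^{α−1} E_{ρ,α}(A(t−s)^{ρ}) · B · f_n(s) ds = f_{n+1}(t), where the integral is a Bochner integral. -/

import Mathlib

open MeasureTheory

/-- The operators `Q_{k,m}^{A,B}` from the paper: `Q k 0 = A^k`, `Q 0 m = B^m`, and
`Q k m = ∑_{l=0}^{k} A^{k-l} B Q l (m-1)` for `m ≥ 1`. -/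
noncomputable def Q {𝔸 : Type*} [Ring 𝔸] (A B : 𝔸) : ℕ → ℕ → 𝔸
  | k, 0 => A ^ k
  | k, m + 1 => ∑ l ∈ Finset.range (k + 1), A ^ (k - l) * B * Q A B l m

/-- The two-parameter Mittag-Leffler function of a Banach-algebra element:
`E_{a,c}(T) = ∑_{k=0}^∞ T^k / Γ(ka+c)`. -/
noncomputable def mlTwo {𝔸 : Type*} [NormedRing 𝔸] [NormedAlgebra ℝ 𝔸] (a c : ℝ) (T : 𝔸) : 𝔸 :=
  ∑' k : ℕ, (Real.Gamma ((k : ℝ) * a + c))⁻¹ • T ^ k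

/-!
Both factors of the integrand are series of Riemann–Liouville kernels `u^{b-1}/Γ(b)` with
coefficients `A^l` and `B Q_{k,n}`. By the Beta integral these kernels form a convolution
semigroup, so integrating the Cauchy product of the two series term by term yields the series
whose `j`-th coefficient is `∑_{l+k=j} A^l B Q_{k,n} = Q_{j,n+1}`. Termwise integration is
justified by absolute convergence: the norms grow at most geometrically while `1/Γ(jρ+c)`
decays faster than any geometric sequence.
-/

open Filter Finset.HasAntidiagonal
open Set (Ioc Ioo Ioi uIcc_of_le)

theorem Real.rpow_natCast_mul_add {u : ℝ} (hu : 0 < u) (j : ℕ) (ρ b : ℝ) :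
    u ^ (j * ρ + b) = (u ^ ρ) ^ j * u ^ b := by
  rw [Real.rpow_add hu, mul_comm (j : ℝ), Real.rpow_mul_natCast hu.le]

theorem Real.rpow_sub_one_mul_exp_neg_le_Gamma {s u : ℝ} (hs : 1 ≤ s) (hu : 0 < u) :
    u ^ (s - 1) * Real.exp (-(u + 1)) ≤ Real.Gamma s := by
  have hint := Real.GammaIntegral_convergent (one_pos.trans_le hs)
  rw [Real.Gamma_eq_integral (one_pos.trans_le hs)]
  have hsub : Ioc u (u + 1) ⊆ Ioi 0 := fun x hx => hu.trans hx.1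
  calc u ^ (s - 1) * Real.exp (-(u + 1))
      = ∫ _ in Ioc u (u + 1), u ^ (s - 1) * Real.exp (-(u + 1)) := by simp
    _ ≤ ∫ x in Ioc u (u + 1), Real.exp (-x) * x ^ (s - 1) := by
        refine setIntegral_mono_on (integrableOn_const (by simp)) (hint.mono_set hsub)
          measurableSet_Ioc fun x hx => ?_
        rw [mul_comm (Real.exp (-x))]
        exact mul_le_mul (Real.rpow_le_rpow hu.le hx.1.le (by linarith))
          (Real.exp_le_exp.2 (by linarith [hx.2])) (Real.exp_nonneg _)
          (Real.rpow_nonneg (hu.trans hx.1).le _)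
    _ ≤ ∫ x in Ioi 0, Real.exp (-x) * x ^ (s - 1) := by
        refine setIntegral_mono_set hint ?_ hsub.eventuallyLE
        filter_upwards [ae_restrict_mem measurableSet_Ioi] with x hx
        exact mul_nonneg (Real.exp_nonneg _) (Real.rpow_nonneg hx.le _)

theorem summable_pow_div_Gamma_mul_add {ρ : ℝ} (hρ : 0 < ρ) (c x : ℝ) :
    Summable fun j : ℕ => x ^ j / Real.Gamma (j * ρ + c) := by
  obtain ⟨u, hxu, hu⟩ : ∃ u : ℝ, 2 * |x| ≤ u ^ ρ ∧ 1 ≤ u :=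
    (((tendsto_rpow_atTop hρ).eventually_ge_atTop _).and (eventually_ge_atTop _)).exists
  have hu0 : 0 < u := one_pos.trans_le hu
  have hlarge : ∀ᶠ j : ℕ in atTop, 1 ≤ j * ρ + c :=
    ((tendsto_natCast_atTop_atTop.atTop_mul_const hρ).atTop_add
      tendsto_const_nhds).eventually_ge_atTop 1
  refine .of_norm_bounded_eventually_nat
    (summable_geometric_two.mul_left (Real.exp (u + 1) * u ^ (1 - c))) ?_
  filter_upwards [hlarge] with j hj
  have hΓ := Real.rpow_sub_one_mul_exp_neg_le_Gamma hj hu0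
  have hpos : 0 < u ^ (j * ρ + c - 1) * Real.exp (-(u + 1)) := by positivity
  rw [norm_div, norm_pow, Real.norm_eq_abs, Real.norm_of_nonneg (hpos.le.trans hΓ)]
  calc |x| ^ j / Real.Gamma (j * ρ + c)
      ≤ |x| ^ j / (u ^ (j * ρ + c - 1) * Real.exp (-(u + 1))) := by gcongr
    _ = Real.exp (u + 1) * u ^ (1 - c) * (|x| / u ^ ρ) ^ j := by
        rw [add_sub_assoc, Real.rpow_natCast_mul_add hu0, Real.exp_neg,
          show 1 - c = -(c - 1) by ring, Real.rpow_neg hu0.le, div_pow]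
        field_simp
    _ ≤ Real.exp (u + 1) * u ^ (1 - c) * (1 / 2) ^ j := by
        have : |x| / u ^ ρ ≤ 1 / 2 := by rw [div_le_iff₀ (by positivity)]; linarith
        gcongr

theorem Real.integral_rpow_mul_one_sub_rpow {a b : ℝ} (ha : 0 < a) (hb : 0 < b) :
    ∫ x in (0 : ℝ)..1, x ^ (a - 1) * (1 - x) ^ (b - 1)
      = Real.Gamma a * Real.Gamma b / Real.Gamma (a + b) := by
  have hβ : Complex.betaIntegral a b
      = ↑(∫ x in (0 : ℝ)..1, x ^ (a - 1) * (1 - x) ^ (b - 1)) := by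
    rw [Complex.betaIntegral, ← intervalIntegral.integral_ofReal]
    refine intervalIntegral.integral_congr fun x hx => ?_
    rw [uIcc_of_le zero_le_one] at hx
    push_cast [Complex.ofReal_cpow hx.1, Complex.ofReal_cpow (sub_nonneg.2 hx.2)]
    rfl
  rw [← ProbabilityTheory.beta, ProbabilityTheory.beta_eq_betaIntegralReal a b ha hb, hβ,
    Complex.ofReal_re]

theorem integral_norm_sum_smul_le {α ι E : Type*} [MeasurableSpace α] {μ : Measure α}
    [NormedAddCommGroup E] [NormedSpace ℝ E] (s : Finset ι) {K : ι → α → ℝ} (u : ι → E)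
    (hK : ∀ i ∈ s, Integrable (K i) μ) (hK0 : ∀ i ∈ s, 0 ≤ᵐ[μ] K i) :
    ∫ x, ‖∑ i ∈ s, K i x • u i‖ ∂μ ≤ ∑ i ∈ s, (∫ x, K i x ∂μ) * ‖u i‖ := by
  calc ∫ x, ‖∑ i ∈ s, K i x • u i‖ ∂μ ≤ ∫ x, ∑ i ∈ s, K i x * ‖u i‖ ∂μ := by
        refine integral_mono_ae (integrable_finsetSum _ fun i hi => (hK i hi).smul_const _).norm
          (integrable_finsetSum _ fun i hi => (hK i hi).mul_const _) ?_
        filter_upwards [(Filter.eventually_all_finset s).2 hK0] with x hx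
        refine (norm_sum_le _ _).trans (Finset.sum_le_sum fun i hi => ?_)
        rw [norm_smul, Real.norm_of_nonneg (hx i hi)]
    _ = ∑ i ∈ s, (∫ x, K i x ∂μ) * ‖u i‖ := by
        rw [integral_finsetSum _ fun i hi => (hK i hi).mul_const _]
        exact Finset.sum_congr rfl fun i _ => integral_mul_const _ _

-- The Riemann–Liouville kernel.
noncomputable def rlKernel (b u : ℝ) : ℝ := u ^ (b - 1) / Real.Gamma b

theorem rlKernel_pos {b u : ℝ} (hb : 0 < b) (hu : 0 < u) : 0 < rlKernel b u :=
  div_pos (Real.rpow_pos_of_pos hu _) (Real.Gamma_pos_of_pos hb)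

theorem summable_rlKernel_mul_pow {ρ u : ℝ} (hρ : 0 < ρ) (hu : 0 < u) (c x : ℝ) :
    Summable fun j : ℕ => rlKernel (j * ρ + c) u * x ^ j := by
  refine ((summable_pow_div_Gamma_mul_add hρ c (u ^ ρ * x)).mul_left (u ^ (c - 1))).congr
    fun j => ?_
  rw [rlKernel, add_sub_assoc, Real.rpow_natCast_mul_add hu, mul_pow]
  ring

theorem summable_rlKernel_mul_succ_mul_pow {ρ u c R : ℝ} (hρ : 0 < ρ) (hu : 0 < u) (hc : 0 < c)
    (hR : 0 ≤ R) : Summable fun j : ℕ => rlKernel (j * ρ + c) u * ((j + 1) * R ^ j) := by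
  refine (summable_rlKernel_mul_pow hρ hu c (2 * R)).of_nonneg_of_le
    (fun j => mul_nonneg (rlKernel_pos (by positivity) hu).le (by positivity)) fun j => ?_
  have hj : (j + 1 : ℝ) ≤ 2 ^ j := by exact_mod_cast Nat.lt_two_pow_self
  rw [mul_pow]
  gcongr
  exact (rlKernel_pos (by positivity) hu).le

theorem intervalIntegral_rlKernel_sub_mul {a c t : ℝ} (ha : 0 < a) (hc : 0 < c) (ht : 0 < t) :
    ∫ s in (0 : ℝ)..t, rlKernel a (t - s) * rlKernel c s = rlKernel (a + c) t := by
  have hsubst : ∫ s in (0 : ℝ)..t, (t - s) ^ (a - 1) * s ^ (c - 1)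
      = t ^ (a + c - 1) * ∫ x in (0 : ℝ)..1, x ^ (c - 1) * (1 - x) ^ (a - 1) := by
    have h := intervalIntegral.smul_integral_comp_mul_left (a := 0) (b := 1)
      (fun s => (t - s) ^ (a - 1) * s ^ (c - 1)) t
    rw [mul_zero, mul_one] at h
    rw [← h, smul_eq_mul, ← intervalIntegral.integral_const_mul,
      ← intervalIntegral.integral_const_mul]
    refine intervalIntegral.integral_congr fun x hx => ?_
    rw [uIcc_of_le zero_le_one] at hx
    rw [show t - t * x = t * (1 - x) by ring, Real.mul_rpow ht.le (sub_nonneg.2 hx.2),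
      Real.mul_rpow ht.le hx.1, show a + c - 1 = (a - 1) + (c - 1) + 1 by ring,
      Real.rpow_add ht, Real.rpow_add ht, Real.rpow_one]
    ring
  have hΓa := (Real.Gamma_pos_of_pos ha).ne'
  have hΓc := (Real.Gamma_pos_of_pos hc).ne'
  simp_rw [rlKernel, div_mul_div_comm]
  rw [intervalIntegral.integral_div, hsubst, Real.integral_rpow_mul_one_sub_rpow hc ha,
    add_comm c]
  field_simp

theorem setIntegral_Ioo_rlKernel_sub_mul {a c t : ℝ} (ha : 0 < a) (hc : 0 < c) (ht : 0 < t) :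
    ∫ s in Ioo 0 t, rlKernel a (t - s) * rlKernel c s = rlKernel (a + c) t := by
  rw [← integral_Ioc_eq_integral_Ioo, ← intervalIntegral.integral_of_le ht.le,
    intervalIntegral_rlKernel_sub_mul ha hc ht]

theorem integrableOn_Ioo_rlKernel_sub_mul {a c t : ℝ} (ha : 0 < a) (hc : 0 < c) (ht : 0 < t) :
    IntegrableOn (fun s => rlKernel a (t - s) * rlKernel c s) (Ioo 0 t) :=
  -- a nonzero integral forces integrability
  .of_integral_ne_zero <| by
    rw [setIntegral_Ioo_rlKernel_sub_mul ha hc ht]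
    exact (rlKernel_pos (add_pos ha hc) ht).ne'

noncomputable def rlSeries {E : Type*} [AddCommMonoid E] [Module ℝ E] [TopologicalSpace E]
    (ρ c : ℝ) (v : ℕ → E) (u : ℝ) : E :=
  ∑' k : ℕ, rlKernel (k * ρ + c) u • v k

theorem rpow_sub_one_smul_mlTwo {𝔸 : Type*} [NormedRing 𝔸] [NormedAlgebra ℝ 𝔸] {ρ c u : ℝ}
    (hu : 0 < u) (A : 𝔸) : u ^ (c - 1) • mlTwo ρ c (u ^ ρ • A) = rlSeries ρ c (A ^ ·) u := by
  rw [mlTwo, ← tsum_const_smul'']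
  refine tsum_congr fun l => ?_
  rw [smul_pow, smul_smul, smul_smul, rlKernel, add_sub_assoc, Real.rpow_natCast_mul_add hu]
  congr 1
  ring

theorem summable_norm_rlKernel_smul {E : Type*} [NormedAddCommGroup E] [NormedSpace ℝ E]
    {ρ u C R : ℝ} (hρ : 0 < ρ) (hu : 0 < u) (c : ℝ) {v : ℕ → E}
    (hv : ∀ k, ‖v k‖ ≤ C * R ^ k) :
    Summable fun k : ℕ => ‖rlKernel (k * ρ + c) u • v k‖ := by
  refine .of_nonneg_of_le (fun k => norm_nonneg _) (fun k => ?_)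
    ((summable_rlKernel_mul_pow hρ hu c R).abs.mul_left |C|)
  rw [norm_smul, Real.norm_eq_abs, abs_mul, ← mul_assoc, mul_comm |C|, mul_assoc, ← abs_mul]
  exact mul_le_mul_of_nonneg_left ((hv k).trans (le_abs_self _)) (abs_nonneg _)

theorem norm_pow_mul_le {R : Type*} [SeminormedRing R] (a b : R) (k : ℕ) :
    ‖a ^ k * b‖ ≤ ‖a‖ ^ k * ‖b‖ := by
  rcases k.eq_zero_or_pos with rfl | hk
  · simp
  · exact (norm_mul_le _ _).trans
      (mul_le_mul_of_nonneg_right (norm_pow_le' a hk) (norm_nonneg b))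

theorem norm_mul_le_mul_pow_add {R : Type*} [SeminormedRing R] {Cv Cw r : ℝ} (hr : 0 ≤ r)
    {v w : ℕ → R} (hv : ∀ k, ‖v k‖ ≤ Cv * r ^ k) (hw : ∀ k, ‖w k‖ ≤ Cw * r ^ k) (l k : ℕ) :
    ‖v l * w k‖ ≤ Cv * Cw * r ^ (l + k) := by
  have hCv : 0 ≤ Cv := by simpa using (norm_nonneg _).trans (hv 0)
  calc ‖v l * w k‖ ≤ (Cv * r ^ l) * (Cw * r ^ k) :=
        (norm_mul_le _ _).trans (mul_le_mul (hv l) (hw k) (norm_nonneg _) (by positivity))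
    _ = Cv * Cw * r ^ (l + k) := by rw [pow_add]; ring

section BanachAlgebra

variable {𝔸 : Type*} [NormedRing 𝔸] [NormedAlgebra ℝ 𝔸] [CompleteSpace 𝔸]

theorem mul_rlSeries {ρ s C R : ℝ} (hρ : 0 < ρ) (hs : 0 < s) (c : ℝ) {v : ℕ → 𝔸}
    (hv : ∀ k, ‖v k‖ ≤ C * R ^ k) (b : 𝔸) :
    b * rlSeries ρ c v s = rlSeries ρ c (fun k => b * v k) s := by
  have hsum := (summable_norm_rlKernel_smul hρ hs c hv).of_norm
  unfold rlSeries
  rw [← hsum.tsum_mul_left]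
  simp_rw [mul_smul_comm]

theorem rlSeries_mul_rlSeries {ρ a c u s Cv Cw Rv Rw : ℝ} (hρ : 0 < ρ) (hu : 0 < u)
    (hs : 0 < s) {v w : ℕ → 𝔸} (hv : ∀ k, ‖v k‖ ≤ Cv * Rv ^ k) (hw : ∀ k, ‖w k‖ ≤ Cw * Rw ^ k) :
    rlSeries ρ a v u * rlSeries ρ c w s
      = ∑' j : ℕ, ∑ p ∈ antidiagonal j,
          (rlKernel (p.1 * ρ + a) u * rlKernel (p.2 * ρ + c) s) • (v p.1 * w p.2) := by
  have hv' := summable_norm_rlKernel_smul hρ hu a hv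
  have hw' := summable_norm_rlKernel_smul hρ hs c hw
  unfold rlSeries
  rw [tsum_mul_tsum_eq_tsum_sum_antidiagonal_of_summable_norm hv' hw']
  exact tsum_congr fun j => Finset.sum_congr rfl fun p _ => smul_mul_smul_comm _ _ _ _

theorem intervalIntegral_rlSeries_sub_mul {ρ a c t Cv Cw R : ℝ} (hρ : 0 < ρ) (ha : 0 < a)
    (hc : 0 < c) (ht : 0 < t) (hR : 0 ≤ R) {v w : ℕ → 𝔸} (hv : ∀ k, ‖v k‖ ≤ Cv * R ^ k)
    (hw : ∀ k, ‖w k‖ ≤ Cw * R ^ k) :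
    ∫ s in (0 : ℝ)..t, rlSeries ρ a v (t - s) * rlSeries ρ c w s
      = rlSeries ρ (a + c) (fun j => ∑ p ∈ antidiagonal j, v p.1 * w p.2) t := by
  set K : ℕ × ℕ → ℝ → ℝ := fun p s =>
    rlKernel (p.1 * ρ + a) (t - s) * rlKernel (p.2 * ρ + c) s
  set G : ℕ → ℝ → 𝔸 := fun j s => ∑ p ∈ antidiagonal j, K p s • (v p.1 * w p.2)
  have hK : ∀ j, ∀ p ∈ antidiagonal j, IntegrableOn (K p) (Ioo 0 t) ∧
      ∫ s in Ioo 0 t, K p s = rlKernel (j * ρ + (a + c)) t := by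
    intro j p hp
    have hpa : 0 < p.1 * ρ + a := by positivity
    have hpc : 0 < p.2 * ρ + c := by positivity
    have hsum : (p.1 * ρ + a) + (p.2 * ρ + c) = j * ρ + (a + c) := by
      rw [← mem_antidiagonal.1 hp]; push_cast; ring
    exact ⟨integrableOn_Ioo_rlKernel_sub_mul hpa hpc ht,
      hsum ▸ setIntegral_Ioo_rlKernel_sub_mul hpa hpc ht⟩
  have hK_nonneg : ∀ p, 0 ≤ᵐ[volume.restrict (Ioo 0 t)] K p := fun p =>
    (ae_restrict_mem measurableSet_Ioo).mono fun s hs =>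
      mul_nonneg (rlKernel_pos (by positivity) (sub_pos.2 hs.2)).le
        (rlKernel_pos (by positivity) hs.1).le
  have hG_int : ∀ j, IntegrableOn (G j) (Ioo 0 t) := fun j =>
    integrable_finsetSum _ fun p hp => (hK j p hp).1.smul_const _
  have hG : ∀ j, ∫ s in Ioo 0 t, G j s
      = rlKernel (j * ρ + (a + c)) t • ∑ p ∈ antidiagonal j, v p.1 * w p.2 := by
    intro j
    rw [integral_finsetSum _ fun p hp => (hK j p hp).1.smul_const _, Finset.smul_sum]
    exact Finset.sum_congr rfl fun p hp => by rw [integral_smul_const, (hK j p hp).2]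
  have hG_norm : ∀ j, ∫ s in Ioo 0 t, ‖G j s‖
      ≤ Cv * Cw * (rlKernel (j * ρ + (a + c)) t * ((j + 1) * R ^ j)) := by
    intro j
    calc ∫ s in Ioo 0 t, ‖G j s‖
        ≤ ∑ p ∈ antidiagonal j, (∫ s in Ioo 0 t, K p s) * ‖v p.1 * w p.2‖ :=
          integral_norm_sum_smul_le _ _ (fun p hp => (hK j p hp).1) fun p _ => hK_nonneg p
      _ ≤ ∑ p ∈ antidiagonal j, rlKernel (j * ρ + (a + c)) t * (Cv * Cw * R ^ j) :=
          Finset.sum_le_sum fun p hp => by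
            rw [(hK j p hp).2, ← mem_antidiagonal.1 hp]
            exact mul_le_mul_of_nonneg_left (norm_mul_le_mul_pow_add hR hv hw _ _)
              (rlKernel_pos (by positivity) ht).le
      _ = Cv * Cw * (rlKernel (j * ρ + (a + c)) t * ((j + 1) * R ^ j)) := by
          rw [Finset.sum_const, Finset.Nat.card_antidiagonal, nsmul_eq_mul]
          push_cast
          ring
  have hsum : Summable fun j => ∫ s in Ioo 0 t, ‖G j s‖ :=
    .of_nonneg_of_le (fun j => integral_nonneg fun _ => norm_nonneg _) hG_norm
      ((summable_rlKernel_mul_succ_mul_pow hρ ht (add_pos ha hc) hR).mul_left _)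
  rw [intervalIntegral.integral_of_le ht.le, integral_Ioc_eq_integral_Ioo,
    setIntegral_congr_fun measurableSet_Ioo fun s hs =>
      rlSeries_mul_rlSeries hρ (sub_pos.2 hs.2) hs.1 hv hw,
    ← integral_tsum_of_summable_integral_norm hG_int hsum]
  exact tsum_congr hG

end BanachAlgebra

theorem Q_succ_eq_sum_antidiagonal {𝔸 : Type*} [Ring 𝔸] (A B : 𝔸) (j m : ℕ) :
    Q A B j (m + 1) = ∑ p ∈ antidiagonal j, A ^ p.1 * (B * Q A B p.2 m) := by
  rw [← Finset.Nat.sum_antidiagonal_swap, Finset.Nat.sum_antidiagonal_eq_sum_range_succ_mk]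
  simp only [Q, Prod.swap_prod_mk, mul_assoc]

theorem norm_Q_le {𝔸 : Type*} [NormedRing 𝔸] (A B : 𝔸) (k m : ℕ) :
    ‖Q A B k m‖ ≤ ‖(1 : 𝔸)‖ * (2 * ‖B‖) ^ m * (2 * ‖A‖) ^ k := by
  induction m generalizing k with
  | zero =>
    calc ‖A ^ k‖ = ‖A ^ k * 1‖ := by rw [mul_one]
      _ ≤ ‖A‖ ^ k * ‖(1 : 𝔸)‖ := norm_pow_mul_le A 1 k
      _ ≤ ‖(1 : 𝔸)‖ * (2 * ‖B‖) ^ 0 * (2 * ‖A‖) ^ k := by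
        rw [pow_zero, mul_one, mul_comm]
        gcongr
        linarith [norm_nonneg A]
  | succ m ih =>
    have hgeom : ∑ l ∈ Finset.range (k + 1), (2 : ℝ) ^ l ≤ 2 ^ (k + 1) := by
      have := geom_sum_mul_add (1 : ℝ) (k + 1)
      norm_num at this
      linarith
    calc ‖Q A B k (m + 1)‖
        ≤ ∑ l ∈ Finset.range (k + 1), ‖A ^ (k - l) * B * Q A B l m‖ := norm_sum_le _ _
      _ ≤ ∑ l ∈ Finset.range (k + 1),
            ‖A‖ ^ (k - l) * ‖B‖ * (‖(1 : 𝔸)‖ * (2 * ‖B‖) ^ m * (2 * ‖A‖) ^ l) :=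
          Finset.sum_le_sum fun l _ => (norm_mul_le _ _).trans
            (mul_le_mul (norm_pow_mul_le _ _ _) (ih l) (norm_nonneg _) (by positivity))
      _ = ‖(1 : 𝔸)‖ * ‖B‖ * (2 * ‖B‖) ^ m * ‖A‖ ^ k *
            ∑ l ∈ Finset.range (k + 1), (2 : ℝ) ^ l := by
          rw [Finset.mul_sum]
          refine Finset.sum_congr rfl fun l hl => ?_
          rw [mul_pow, ← pow_sub_mul_pow ‖A‖ (Finset.mem_range_succ_iff.1 hl)]
          ring
      _ ≤ ‖(1 : 𝔸)‖ * ‖B‖ * (2 * ‖B‖) ^ m * ‖A‖ ^ k * 2 ^ (k + 1) := by gcongr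
      _ = ‖(1 : 𝔸)‖ * (2 * ‖B‖) ^ (m + 1) * (2 * ‖A‖) ^ k := by ring

/-- Convolving `(t−s)^{α−1} E_{ρ,α}(A(t−s)^ρ) B` with
`f_n(s) = ∑_k Q_{k,n}^{A,B} s^{kρ+nα+α−γ−1}/Γ(kρ+nα+α−γ)` yields `f_{n+1}(t)`. -/
theorem mlTwo_convolution_Q {𝔸 : Type*} [NormedRing 𝔸] [NormedAlgebra ℝ 𝔸] [CompleteSpace 𝔸]
    (A B : 𝔸) (ρ α γ : ℝ) (hρ : 0 < ρ) (hα : 0 < α) (hγ : γ < α) (n : ℕ)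
    (f : ℕ → ℝ → 𝔸)
    (hf : ∀ (m : ℕ) (t : ℝ), f m t
      = ∑' k : ℕ, (t ^ ((k : ℝ) * ρ + (m : ℝ) * α + α - γ - 1) /
          Real.Gamma ((k : ℝ) * ρ + (m : ℝ) * α + α - γ)) • Q A B k m)
    (t : ℝ) (ht : 0 < t) :
    ∫ s in (0:ℝ)..t, ((t - s) ^ (α - 1)) • (mlTwo ρ α (((t - s) ^ ρ) • A) * B * f n s)
      = f (n + 1) t := by
  have hc : 0 < (n : ℝ) * α + α - γ := by
    have : (0 : ℝ) ≤ n * α := by positivity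
    linarith
  have hf_eq : ∀ m s, f m s = rlSeries ρ (m * α + α - γ) (fun k => Q A B k m) s := fun m s => by
    simp only [hf, rlSeries, rlKernel, ← add_sub_assoc, ← add_assoc]
  have hA : ∀ l, ‖A ^ l‖ ≤ ‖(1 : 𝔸)‖ * (2 * ‖A‖) ^ l := fun l => by
    simpa [Q] using norm_Q_le A B l 0
  have hBQ : ∀ k, ‖B * Q A B k n‖ ≤ ‖B‖ * (‖(1 : 𝔸)‖ * (2 * ‖B‖) ^ n) * (2 * ‖A‖) ^ k :=
    fun k => (norm_mul_le _ _).trans <| by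
      rw [mul_assoc]; exact mul_le_mul_of_nonneg_left (norm_Q_le A B k n) (norm_nonneg B)
  calc ∫ s in (0 : ℝ)..t, (t - s) ^ (α - 1) • (mlTwo ρ α ((t - s) ^ ρ • A) * B * f n s)
      = ∫ s in (0 : ℝ)..t,
          rlSeries ρ α (A ^ ·) (t - s) * rlSeries ρ (n * α + α - γ) (fun k => B * Q A B k n) s :=
        intervalIntegral.integral_congr_Ioo_of_le ht.le fun s hs => by
          rw [mul_assoc, ← smul_mul_assoc, rpow_sub_one_smul_mlTwo (sub_pos.2 hs.2), hf_eq,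
            mul_rlSeries hρ hs.1 _ (norm_Q_le A B · n)]
    _ = rlSeries ρ (α + (n * α + α - γ))
          (fun j => ∑ p ∈ antidiagonal j, A ^ p.1 * (B * Q A B p.2 n)) t :=
        intervalIntegral_rlSeries_sub_mul hρ hα hc ht (by positivity) hA hBQ
    _ = f (n + 1) t := by
        rw [hf_eq]
        congr 1
        · push_cast; ring
        · exact funext fun j => (Q_succ_eq_sum_antidiagonal A B j n).symm
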